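/- Let (A, Con, Δ, ⊢) be a normal default structure, and x, y, z information states. If x ε y and x ε z, then either y = z or y ∪ z is not consistent. In other words, distinct extensions of the same state are mutually inconsistent. -/

import Mathlib

/-- A set is consistent if every finite subset of it lies in Con. -/
def IsCons {α : Type*} (Con : Set α → Prop) (S : Set α) : Prop :=
  ∀ X : Set α, X ⊆ S → X.Finite → Con X

/-- F(X) := {a ∈ A | ∃ finite Y ⊆ X with Y ∈ Con and Y ⊢ a}. -/
def Fop {α : Type*} (Con : Set α → Prop) (ent : Set α → α → Prop) (S : Set α) : Set α :=
  {a | ∃ Y : Set α, Y ⊆ S ∧ Y.Finite ∧ Con Y ∧ ent Y a}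

/-- φ(x, S, 0) = x and
φ(x, S, i+1) = F(φ(x, S, i)) ∪ {a | (X, a) ∈ Δ, X ⊆ φ(x, S, i), {a} ∪ S consistent}. -/
def phi {α : Type*} (Con : Set α → Prop) (ent : Set α → α → Prop)
    (Δ : Set (Set α × α)) (x S : Set α) : ℕ → Set α
  | 0 => x
  | i + 1 =>
      Fop Con ent (phi Con ent Δ x S i) ∪
        {a | ∃ X : Set α, (X, a) ∈ Δ ∧ X ⊆ phi Con ent Δ x S i ∧ IsCons Con ({a} ∪ S)}

/-- Φ(x, S) = ⋃_{i≥0} φ(x, S, i). -/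
def Phi {α : Type*} (Con : Set α → Prop) (ent : Set α → α → Prop)
    (Δ : Set (Set α × α)) (x S : Set α) : Set α :=
  ⋃ i, phi Con ent Δ x S i

/-- An information state is a set of the form F(X) with X consistent. -/
def IsState {α : Type*} (Con : Set α → Prop) (ent : Set α → α → Prop) (x : Set α) : Prop :=
  ∃ X : Set α, IsCons Con X ∧ x = Fop Con ent X

/-- An information state y is an extension of x (written x ε y) if Φ(x, y) = y. -/
def IsExt {α : Type*} (Con : Set α → Prop) (ent : Set α → α → Prop)
    (Δ : Set (Set α × α)) (x y : Set α) : Prop :=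
  IsState Con ent y ∧ Phi Con ent Δ x y = y

/-!
If `y ∪ z` is consistent, every default fired while computing `Φ(x, y)` has its justification
consistent with `z` as well, so by induction every stage of `Φ(x, y)` lies in `Φ(x, z)`. The
stages increase, so the finitely many premises of an inference or a default sit in a single
stage of `Φ(x, z)`. Hence `y ⊆ z`, and by symmetry `y = z`.
-/

section DefaultStructure

variable {α : Type*} {Con : Set α → Prop} {ent : Set α → α → Prop} {Δ : Set (Set α × α)}

lemma IsCons.mono {S T : Set α} (hST : S ⊆ T) (hT : IsCons Con T) : IsCons Con S :=
  fun X hX hfin => hT X (hX.trans hST) hfin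

lemma subset_Fop (hCsing : ∀ a : α, Con {a})
    (hRefl : ∀ (X : Set α) (a : α), a ∈ X → Con X → ent X a) (s : Set α) :
    s ⊆ Fop Con ent s :=
  fun a ha => ⟨{a}, Set.singleton_subset_iff.2 ha, Set.finite_singleton a, hCsing a,
    hRefl _ a rfl (hCsing a)⟩

lemma phi_mono (hCsing : ∀ a : α, Con {a})
    (hRefl : ∀ (X : Set α) (a : α), a ∈ X → Con X → ent X a) (x S : Set α) :
    Monotone (phi Con ent Δ x S) :=
  monotone_nat_of_le_succ fun _ => (subset_Fop hCsing hRefl _).trans Set.subset_union_left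

lemma phi_subset_Phi (x S : Set α) (i : ℕ) : phi Con ent Δ x S i ⊆ Phi Con ent Δ x S :=
  Set.subset_iUnion _ i

lemma exists_subset_phi_of_finite (hCsing : ∀ a : α, Con {a})
    (hRefl : ∀ (X : Set α) (a : α), a ∈ X → Con X → ent X a) {x S X : Set α}
    (hX : X.Finite) (hXS : X ⊆ Phi Con ent Δ x S) : ∃ j, X ⊆ phi Con ent Δ x S j := by
  have hdir := (phi_mono (Δ := Δ) hCsing hRefl x S).directed_le
  simpa using hdir.exists_mem_subset_of_finset_subset_biUnion (s := hX.toFinset) (by simpa)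

lemma Phi_subset_Phi_of_isCons (hCfin : ∀ X : Set α, Con X → X.Finite)
    (hCsing : ∀ a : α, Con {a})
    (hRefl : ∀ (X : Set α) (a : α), a ∈ X → Con X → ent X a)
    (hDelta : ∀ p ∈ Δ, Con p.1) {x y z : Set α}
    (hcons : IsCons Con (Phi Con ent Δ x y ∪ z)) :
    Phi Con ent Δ x y ⊆ Phi Con ent Δ x z := by
  refine Set.iUnion_subset fun i => ?_
  induction i with
  | zero => exact phi_subset_Phi x z 0
  | succ i ih =>
    intro a ha
    rcases id ha with ⟨Y, hY, hYfin, hYcon, hYa⟩ | ⟨X, hXΔ, hX, -⟩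
    · obtain ⟨j, hj⟩ := exists_subset_phi_of_finite hCsing hRefl hYfin (hY.trans ih)
      exact phi_subset_Phi x z (j + 1) (Or.inl ⟨Y, hj, hYfin, hYcon, hYa⟩)
    · obtain ⟨j, hj⟩ :=
        exists_subset_phi_of_finite hCsing hRefl (hCfin X (hDelta _ hXΔ)) (hX.trans ih)
      have haz : IsCons Con ({a} ∪ z) := hcons.mono <|
        Set.union_subset_union_left z (Set.singleton_subset_iff.2 (phi_subset_Phi x y _ ha))
      exact phi_subset_Phi x z (j + 1) (Or.inr ⟨X, hXΔ, hj, haz⟩)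

lemma IsExt.subset_of_isCons (hCfin : ∀ X : Set α, Con X → X.Finite)
    (hCsing : ∀ a : α, Con {a})
    (hRefl : ∀ (X : Set α) (a : α), a ∈ X → Con X → ent X a)
    (hDelta : ∀ p ∈ Δ, Con p.1) {x y z : Set α}
    (hy : IsExt Con ent Δ x y) (hz : IsExt Con ent Δ x z) (hcons : IsCons Con (y ∪ z)) :
    y ⊆ z :=
  calc y = Phi Con ent Δ x y := hy.2.symm
    _ ⊆ Phi Con ent Δ x z :=
      Phi_subset_Phi_of_isCons hCfin hCsing hRefl hDelta (by rwa [hy.2])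
    _ = z := hz.2

end DefaultStructure

theorem extensions_orthogonal_general {α : Type*} (Con : Set α → Prop) (ent : Set α → α → Prop)
    (Δ : Set (Set α × α))
    (hCfin : ∀ X : Set α, Con X → X.Finite)
    (hCsing : ∀ a : α, Con {a})
    (hRefl : ∀ (X : Set α) (a : α), a ∈ X → Con X → ent X a)
    -- Δ is a set of normal default rules, each a pair (X, a) with X ∈ Con
    (hDelta : ∀ p ∈ Δ, Con p.1) :
    ∀ x y z : Set α, IsState Con ent x → IsState Con ent y → IsState Con ent z →
      IsExt Con ent Δ x y → IsExt Con ent Δ x z →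
      y = z ∨ ¬ IsCons Con (y ∪ z) := by
  intro x y z _ _ _ hy hz
  by_cases hcons : IsCons Con (y ∪ z)
  · exact Or.inl <| (hy.subset_of_isCons hCfin hCsing hRefl hDelta hz hcons).antisymm
      (hz.subset_of_isCons hCfin hCsing hRefl hDelta hy (Set.union_comm y z ▸ hcons))
  · exact Or.inr hcons

/-- distinct extensions of the same state are mutually inconsistent. -/
theorem extensions_orthogonal {α : Type*} (Con : Set α → Prop) (ent : Set α → α → Prop)
    (Δ : Set (Set α × α))
    (hCfin : ∀ X : Set α, Con X → X.Finite)
    (hCempty : Con ∅)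
    (hEntCon : ∀ (X : Set α) (a : α), ent X a → Con X)
    (hCsub : ∀ X Y : Set α, X ⊆ Y → Con Y → Con X)
    (hCsing : ∀ a : α, Con {a})
    (hEntAdd : ∀ (X : Set α) (a : α), ent X a → Con X → Con (X ∪ {a}))
    (hRefl : ∀ (X : Set α) (a : α), a ∈ X → Con X → ent X a)
    (hTrans : ∀ (X Y : Set α) (c : α), (∀ b ∈ Y, ent X b) → ent Y c → ent X c)
    -- Δ is a set of normal default rules, each a pair (X, a) with X ∈ Con
    (hDelta : ∀ p ∈ Δ, Con p.1) :
    ∀ x y z : Set α, IsState Con ent x → IsState Con ent y → IsState Con ent z →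
      IsExt Con ent Δ x y → IsExt Con ent Δ x z →
      y = z ∨ ¬ IsCons Con (y ∪ z) :=
  extensions_orthogonal_general Con ent Δ hCfin hCsing hRefl hDelta
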